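/- Let a_0,...,a_n ∈ {1,...,p-1} and e_0,...,e_n ∈ ℤ with e_1,...,e_n > 0. Then for all x ∈ pℤ_p, f applied to the finite continued fraction p^{e_0}/(a_0 + p^{e_1}/(a_1 + ... + p^{e_n}/(a_n + x))) equals f(x)·p^{e_0+...+e_n} + Σ_{i=0}^n a_i p^{e_0+...+e_i}. -/

import Mathlib

open scoped Classical in
noncomputable def eps {p : ℕ} [Fact p.Prime] (x : ℚ_[p]) : ℚ_[p] :=
  if x = 0 then 1 else (p : ℚ_[p]) ^ (-x.valuation) * x

noncomputable def fdigit {p : ℕ} [Fact p.Prime] (x : ℚ_[p]) : ℕ :=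
  if h : ‖x‖ ≤ 1 then ((PadicInt.toZMod (⟨x, h⟩ : ℤ_[p])).val) else 0

noncomputable def tau {p : ℕ} [Fact p.Prime] (x : ℚ_[p]) : ℚ_[p] :=
  1 / eps x - (fdigit (1 / eps x) : ℚ_[p])

noncomputable def sigma {p : ℕ} [Fact p.Prime] (x : ℚ_[p]) : ℚ_[p] :=
  eps x - (fdigit (eps x) : ℚ_[p])

/-- `f(x) = Σ_{n=0}^∞ ⌊1/ε(τⁿ x)⌋_p ∏_{m=0}^n τᵐ x / ε(τᵐ x)` -/
noncomputable def schneiderF {p : ℕ} [Fact p.Prime] (x : ℚ_[p]) : ℚ_[p] :=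
  ∑' n : ℕ, (fdigit (1 / eps (tau^[n] x)) : ℚ_[p]) *
    ∏ m ∈ Finset.range (n + 1), (tau^[m] x) / eps (tau^[m] x)

/-- Finite continued fraction `b 0 / (a 0 + b 1 / (a 1 + ⋯ + b n / (a n + x)))`. -/
noncomputable def cf {p : ℕ} [Fact p.Prime] : (ℕ → ℚ_[p]) → (ℕ → ℚ_[p]) → ℕ → ℚ_[p] → ℚ_[p]
  | a, b, 0, x => b 0 / (a 0 + x)
  | a, b, n + 1, x => b 0 / (a 0 + cf (fun i => a (i + 1)) (fun i => b (i + 1)) n x)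



section helpers

variable {p : ℕ} [hp : Fact p.Prime]

lemma norm_eps (x : ℚ_[p]) : ‖eps x‖ = 1 := by
  rw [eps]
  split_ifs with h
  · simp
  · have hpne : (p : ℝ) ≠ 0 := by exact_mod_cast hp.out.ne_zero
    rw [norm_mul, Padic.norm_p_zpow, Padic.norm_eq_zpow_neg_valuation h, neg_neg, ← zpow_add₀ hpne]
    simp

lemma eps_ne_zero (x : ℚ_[p]) : eps x ≠ 0 := by
  intro h
  have := norm_eps x
  rw [h] at this
  simp at this

lemma norm_one_div_eps (x : ℚ_[p]) : ‖1 / eps x‖ = 1 := by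
  rw [norm_div, norm_eps, norm_one]; norm_num

lemma toZMod_eq_zero_of_norm_lt_one (z : ℤ_[p]) (hz : ‖z‖ < 1) :
    PadicInt.toZMod z = 0 := by
  have hmem : z ∈ IsLocalRing.maximalIdeal ℤ_[p] := by
    rw [PadicInt.maximalIdeal_eq_span_p, Ideal.mem_span_singleton]
    exact (PadicInt.norm_lt_one_iff_dvd z).mp hz
  rw [← PadicInt.ker_toZMod] at hmem
  exact RingHom.mem_ker.mp hmem

lemma norm_tau_lt_one (x : ℚ_[p]) : ‖tau x‖ < 1 := by
  have hu : ‖1 / eps x‖ ≤ 1 := (norm_one_div_eps x).le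
  set U : ℤ_[p] := ⟨1 / eps x, hu⟩ with hU
  have hd : fdigit (1 / eps x) = (PadicInt.toZMod U).val := by
    rw [fdigit, dif_pos hu]
  set r : ℤ_[p] := U - ((PadicInt.toZMod U).val : ℤ_[p]) with hr
  have htz : PadicInt.toZMod r = 0 := by
    rw [hr, map_sub, map_natCast, ZMod.natCast_val, ZMod.cast_id, sub_self]
  have hrlt : ‖r‖ < 1 := by
    rw [PadicInt.norm_lt_one_iff_dvd, ← Ideal.mem_span_singleton,
      ← PadicInt.maximalIdeal_eq_span_p, ← PadicInt.ker_toZMod]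
    exact RingHom.mem_ker.mpr htz
  have : tau x = (r : ℚ_[p]) := by
    rw [tau, hd, hr, PadicInt.coe_sub, PadicInt.coe_natCast]
  rw [this, ← PadicInt.norm_def]
  exact hrlt

lemma norm_div_eps_le {w : ℚ_[p]} (hw : ‖w‖ < 1) : ‖w / eps w‖ ≤ (p : ℝ)⁻¹ := by
  rw [norm_div, norm_eps, div_one]
  have := (Padic.norm_le_pow_iff_norm_lt_pow_add_one w (-1)).mpr (by simpa using hw)
  simpa using this

lemma norm_natCast_le_one (d : ℕ) : ‖(d : ℚ_[p])‖ ≤ 1 := by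
  have := Padic.norm_int_le_one (p := p) d
  simpa using this

lemma schneider_summable (x : ℚ_[p]) :
    Summable (fun n : ℕ => (fdigit (1 / eps (tau^[n] x)) : ℚ_[p]) *
      ∏ m ∈ Finset.range (n + 1), (tau^[m] x) / eps (tau^[m] x)) := by
  apply NonarchimedeanAddGroup.summable_of_tendsto_cofinite_zero
  rw [Nat.cofinite_eq_atTop]
  have hp1 : (1 : ℝ) < p := by exact_mod_cast hp.out.one_lt
  have hbound : ∀ n : ℕ, ‖(fdigit (1 / eps (tau^[n] x)) : ℚ_[p]) *
      ∏ m ∈ Finset.range (n + 1), (tau^[m] x) / eps (tau^[m] x)‖ ≤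
      ‖x / eps x‖ * ((p : ℝ)⁻¹) ^ n := by
    intro n
    rw [norm_mul, norm_prod]
    calc ‖(fdigit (1 / eps (tau^[n] x)) : ℚ_[p])‖ *
        ∏ m ∈ Finset.range (n + 1), ‖(tau^[m] x) / eps (tau^[m] x)‖
        ≤ 1 * ∏ m ∈ Finset.range (n + 1), ‖(tau^[m] x) / eps (tau^[m] x)‖ := by
          apply mul_le_mul_of_nonneg_right (norm_natCast_le_one _)
          exact Finset.prod_nonneg fun _ _ => norm_nonneg _
      _ = (∏ i ∈ Finset.range n, ‖(tau^[i+1] x) / eps (tau^[i+1] x)‖) * ‖x / eps x‖ := by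
          rw [one_mul, Finset.prod_range_succ' (fun m => ‖(tau^[m] x) / eps (tau^[m] x)‖) n]
          simp
      _ ≤ (∏ _i ∈ Finset.range n, (p : ℝ)⁻¹) * ‖x / eps x‖ := by
          apply mul_le_mul_of_nonneg_right _ (norm_nonneg _)
          apply Finset.prod_le_prod (fun _ _ => norm_nonneg _)
          intro i _
          apply norm_div_eps_le
          rw [Function.iterate_succ_apply']
          exact norm_tau_lt_one _
      _ = ‖x / eps x‖ * ((p : ℝ)⁻¹) ^ n := by
          rw [Finset.prod_const, Finset.card_range, mul_comm]
  apply squeeze_zero_norm hbound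
  rw [← mul_zero (‖x / eps x‖)]
  apply Filter.Tendsto.const_mul
  apply tendsto_pow_atTop_nhds_zero_of_lt_one (by positivity)
  rw [inv_lt_one_iff₀]
  right; exact hp1

lemma norm_unit_add {a : ℕ} (ha1 : 1 ≤ a) (ha2 : a ≤ p - 1) {z : ℚ_[p]} (hz : ‖z‖ < 1) :
    ‖(a : ℚ_[p]) + z‖ = 1 := by
  have halt : a < p := by omega
  have hna : ‖(a : ℚ_[p])‖ = 1 := by
    refine le_antisymm (norm_natCast_le_one a) ?_
    by_contra hlt
    push_neg at hlt
    have : ‖((a : ℤ) : ℚ_[p])‖ < 1 := by simpa using hlt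
    rw [Padic.norm_intCast_lt_one_iff] at this
    have := Int.le_of_dvd (by exact_mod_cast ha1) this
    omega
  rw [Padic.add_eq_max_of_ne (by rw [hna]; exact (ne_of_lt hz).symm), hna]
  exact max_eq_left hz.le

lemma key_step (e : ℤ) (a : ℕ) (ha1 : 1 ≤ a) (ha2 : a ≤ p - 1)
    (z : ℚ_[p]) (hz : ‖z‖ < 1) :
    schneiderF ((p : ℚ_[p]) ^ e / ((a : ℚ_[p]) + z)) =
      schneiderF z * (p : ℚ_[p]) ^ e + (a : ℚ_[p]) * (p : ℚ_[p]) ^ e := by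
  rw [schneiderF, schneiderF]
  have hp1 : (1 : ℝ) < p := by exact_mod_cast hp.out.one_lt
  have hpq : (p : ℚ_[p]) ≠ 0 := by exact_mod_cast hp.out.ne_zero
  have hpe : (p : ℚ_[p]) ^ e ≠ 0 := zpow_ne_zero _ hpq
  have hden : ‖(a : ℚ_[p]) + z‖ = 1 := norm_unit_add ha1 ha2 hz
  have hden0 : (a : ℚ_[p]) + z ≠ 0 := by
    intro h; rw [h] at hden; simp at hden
  set y : ℚ_[p] := (p : ℚ_[p]) ^ e / ((a : ℚ_[p]) + z) with hy
  have hy0 : y ≠ 0 := div_ne_zero hpe hden0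
  have hynorm : ‖y‖ = (p : ℝ) ^ (-e) := by
    rw [hy, norm_div, Padic.norm_p_zpow, hden, div_one]
  have hval : y.valuation = e := by
    have h1 : ((p : ℝ)) ^ (-y.valuation) = (p : ℝ) ^ (-e) := by
      rw [← Padic.norm_eq_zpow_neg_valuation hy0, hynorm]
    have := (zpow_right_inj₀ (by positivity) (ne_of_gt hp1)).mp h1
    omega
  have heps : eps y = ((a : ℚ_[p]) + z)⁻¹ := by
    rw [eps, if_neg hy0, hval, hy, zpow_neg]
    field_simp
  have hinv : 1 / eps y = (a : ℚ_[p]) + z := by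
    rw [heps, one_div, inv_inv]
  have halt : a < p := by omega
  have hdig : fdigit ((a : ℚ_[p]) + z) = a := by
    have hle : ‖(a : ℚ_[p]) + z‖ ≤ 1 := hden.le
    rw [fdigit, dif_pos hle]
    have hW : (⟨(a : ℚ_[p]) + z, hle⟩ : ℤ_[p]) = (a : ℤ_[p]) + ⟨z, hz.le⟩ := by
      ext
      push_cast
      rfl
    rw [hW]
    change (PadicInt.toZMod ((a : ℤ_[p]) + ⟨z, hz.le⟩)).val = a
    erw [map_add]
    rw [map_natCast, toZMod_eq_zero_of_norm_lt_one ⟨z, hz.le⟩ hz, add_zero,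
      ZMod.val_natCast_of_lt halt]
  have htau : tau y = z := by
    rw [tau, hinv, hdig]; ring
  have hfac : y / eps y = (p : ℚ_[p]) ^ e := by
    rw [heps, hy]
    field_simp
  have hs := schneider_summable y
  rw [hs.tsum_eq_zero_add]
  have h0 : (fdigit (1 / eps (tau^[0] y)) : ℚ_[p]) *
      ∏ m ∈ Finset.range (0 + 1), (tau^[m] y) / eps (tau^[m] y) = (a : ℚ_[p]) * (p : ℚ_[p]) ^ e := by
    simp only [Function.iterate_zero_apply, zero_add, Finset.range_one,
      Finset.prod_singleton, hinv, hdig, hfac]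
  have hsucc : ∀ n : ℕ, (fdigit (1 / eps (tau^[n+1] y)) : ℚ_[p]) *
      ∏ m ∈ Finset.range (n + 1 + 1), (tau^[m] y) / eps (tau^[m] y) =
      ((fdigit (1 / eps (tau^[n] z)) : ℚ_[p]) *
        ∏ m ∈ Finset.range (n + 1), (tau^[m] z) / eps (tau^[m] z)) * (p : ℚ_[p]) ^ e := by
    intro n
    have hiter : ∀ m : ℕ, tau^[m+1] y = tau^[m] z := by
      intro m
      rw [Function.iterate_succ_apply, htau]
    rw [Finset.prod_range_succ' (fun m => (tau^[m] y) / eps (tau^[m] y)) (n + 1)]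
    simp only [hiter, Function.iterate_zero_apply]
    rw [hfac]
    ring
  rw [h0]
  conv_lhs => rw [show (fun n : ℕ => (fdigit (1 / eps (tau^[n+1] y)) : ℚ_[p]) *
      ∏ m ∈ Finset.range (n + 1 + 1), (tau^[m] y) / eps (tau^[m] y)) = fun n : ℕ =>
      ((fdigit (1 / eps (tau^[n] z)) : ℚ_[p]) *
        ∏ m ∈ Finset.range (n + 1), (tau^[m] z) / eps (tau^[m] z)) * (p : ℚ_[p]) ^ e
      from funext hsucc]
  rw [tsum_mul_right]
  ring


lemma cf_norm : ∀ (n : ℕ) (a : ℕ → ℕ) (e : ℕ → ℤ),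
    (∀ i ≤ n, 1 ≤ a i ∧ a i ≤ p - 1) → (∀ i ≤ n, 0 < e i) →
    ∀ x : ℚ_[p], ‖x‖ < 1 →
    ‖cf (fun i => (a i : ℚ_[p])) (fun i => (p : ℚ_[p]) ^ (e i)) n x‖ < 1 := by
  have hp1 : (1 : ℝ) < p := by exact_mod_cast hp.out.one_lt
  have hnd : ∀ (a₀ : ℕ) (e₀ : ℤ), 1 ≤ a₀ → a₀ ≤ p - 1 → 0 < e₀ → ∀ z : ℚ_[p], ‖z‖ < 1 →
      ‖(p : ℚ_[p]) ^ e₀ / ((a₀ : ℚ_[p]) + z)‖ < 1 := by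
    intro a₀ e₀ h1 h2 h3 z hz
    rw [norm_div, Padic.norm_p_zpow, norm_unit_add h1 h2 hz, div_one]
    exact zpow_lt_one_of_neg₀ hp1 (by omega)
  intro n
  induction n with
  | zero =>
    intro a e ha he x hx
    exact hnd (a 0) (e 0) (ha 0 le_rfl).1 (ha 0 le_rfl).2 (he 0 le_rfl) x hx
  | succ n ih =>
    intro a e ha he x hx
    have hz := ih (fun i => a (i + 1)) (fun i => e (i + 1))
      (fun i hi => ha (i + 1) (by omega)) (fun i hi => he (i + 1) (by omega)) x hx
    exact hnd (a 0) (e 0) (ha 0 (by omega)).1 (ha 0 (by omega)).2 (he 0 (by omega)) _ hz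

end helpers

theorem schneiderF_cf (p : ℕ) [Fact p.Prime] (n : ℕ) (a : ℕ → ℕ) (e : ℕ → ℤ)
    (ha : ∀ i ≤ n, 1 ≤ a i ∧ a i ≤ p - 1) (he : ∀ i, 1 ≤ i → i ≤ n → 0 < e i)
    (x : ℚ_[p]) (hx : ‖x‖ < 1) :
    schneiderF (cf (fun i => (a i : ℚ_[p])) (fun i => (p : ℚ_[p]) ^ (e i)) n x) =
      schneiderF x * (p : ℚ_[p]) ^ (∑ i ∈ Finset.range (n + 1), e i) +
        ∑ i ∈ Finset.range (n + 1), (a i : ℚ_[p]) * (p : ℚ_[p]) ^ (∑ j ∈ Finset.range (i + 1), e j) := by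
  have hpq : (p : ℚ_[p]) ≠ 0 := by exact_mod_cast (Fact.out : p.Prime).ne_zero
  induction n generalizing a e with
  | zero =>
    have h := key_step (e 0) (a 0) (ha 0 le_rfl).1 (ha 0 le_rfl).2 x hx
    show schneiderF ((p : ℚ_[p]) ^ (e 0) / ((a 0 : ℚ_[p]) + x)) = _
    rw [h]
    simp [Finset.sum_range_one]
  | succ n ih =>
    have ha' : ∀ i ≤ n, 1 ≤ a (i + 1) ∧ a (i + 1) ≤ p - 1 := fun i hi => ha (i + 1) (by omega)
    have he' : ∀ i, 1 ≤ i → i ≤ n → 0 < e (i + 1) := fun i h1 h2 => he (i + 1) (by omega) (by omega)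
    have he'' : ∀ i ≤ n, 0 < e (i + 1) := fun i hi => he (i + 1) (by omega) (by omega)
    have hz : ‖cf (fun i => (a (i + 1) : ℚ_[p])) (fun i => (p : ℚ_[p]) ^ (e (i + 1))) n x‖ < 1 :=
      cf_norm n (fun i => a (i + 1)) (fun i => e (i + 1)) ha' he'' x hx
    show schneiderF ((p : ℚ_[p]) ^ (e 0) / ((a 0 : ℚ_[p]) +
        cf (fun i => (a (i + 1) : ℚ_[p])) (fun i => (p : ℚ_[p]) ^ (e (i + 1))) n x)) = _
    rw [key_step (e 0) (a 0) (ha 0 (by omega)).1 (ha 0 (by omega)).2 _ hz,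
      ih (fun i => a (i + 1)) (fun i => e (i + 1)) ha' he']
    have hgoal : ∑ i ∈ Finset.range (n + 1 + 1), (a i : ℚ_[p]) *
        (p : ℚ_[p]) ^ (∑ j ∈ Finset.range (i + 1), e j) =
        (∑ i ∈ Finset.range (n + 1), (a (i + 1) : ℚ_[p]) *
          (p : ℚ_[p]) ^ (∑ j ∈ Finset.range (i + 1), e (j + 1))) * (p : ℚ_[p]) ^ (e 0) +
          (a 0 : ℚ_[p]) * (p : ℚ_[p]) ^ (e 0) := by
      rw [Finset.sum_range_succ' (fun i => (a i : ℚ_[p]) *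
        (p : ℚ_[p]) ^ (∑ j ∈ Finset.range (i + 1), e j)) (n + 1), Finset.sum_mul,
        Finset.sum_range_one]
      congr 1
      apply Finset.sum_congr rfl
      intro i _
      beta_reduce
      rw [Finset.sum_range_succ' e (i + 1), zpow_add₀ hpq, mul_assoc]
    rw [hgoal, Finset.sum_range_succ' e (n + 1), zpow_add₀ hpq]
    ring
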